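/- arXiv:1110.6594 — 3 statements merged into one kernel-verified Lean document; each statement's English description precedes it below -/
import Mathlib

section
/- Let H be a complex Hilbert space, let A, B be positive bounded linear operators on H, and let λ > 0. Then the inequality (A+B)(λI+A+B)^{-1} ≤ A(λI+A)^{-1} + B(λI+B)^{-1} holds if and only if AB + BA + B·A(λI+A)^{-1}·B + A·B(λI+B)^{-1}·A ≥ 0. -/
/-- A real function `f` is *operator monotone on the set `S ⊆ ℝ`* if for all bounded
self-adjoint operators `A ≤ B` (in the Loewner order) on any complex Hilbert space, with
spectra contained in `S`, one has `f(A) ≤ f(B)`, where `f(A)` is given by the continuous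
functional calculus. -/
def IsOperatorMonotoneOn (f : ℝ → ℝ) (S : Set ℝ) : Prop :=
  ∀ (K : Type) [NormedAddCommGroup K] [InnerProductSpace ℂ K] [CompleteSpace K],
    ∀ A B : K →L[ℂ] K, IsSelfAdjoint A → IsSelfAdjoint B →
      spectrum ℝ A ⊆ S → spectrum ℝ B ⊆ S →
      A ≤ B → cfc f A ≤ cfc f B

/-- A real function `f` is *operator convex on `[0,∞)`* if for all bounded self-adjoint
operators `A`, `B` on any complex Hilbert space with spectra in `[0,∞)` and all `t ∈ [0,1]`,
`f(tA + (1-t)B) ≤ t f(A) + (1-t) f(B)` in the sense of the continuous functional calculus. -/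
def IsOperatorConvexOnNonneg (f : ℝ → ℝ) : Prop :=
  ∀ (K : Type) [NormedAddCommGroup K] [InnerProductSpace ℂ K] [CompleteSpace K],
    ∀ A B : K →L[ℂ] K, IsSelfAdjoint A → IsSelfAdjoint B →
      spectrum ℝ A ⊆ Set.Ici (0 : ℝ) → spectrum ℝ B ⊆ Set.Ici (0 : ℝ) →
      ∀ t : ℝ, 0 ≤ t → t ≤ 1 →
        cfc f (t • A + (1 - t) • B) ≤ t • cfc f A + (1 - t) • cfc f B

/-- The right derivative of `f` at `0`, `f′₊(0) = lim_{t→0⁺} (f t - f 0)/t`, exists and is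
non-negative. -/
def HasNonnegRightDerivAtZero (f : ℝ → ℝ) : Prop :=
  ∃ d : ℝ, 0 ≤ d ∧
    Filter.Tendsto (fun t => (f t - f 0) / t) (nhdsWithin 0 (Set.Ioi 0)) (nhds d)

/-- The open interval `(a,b) ⊆ ℝ` determined by extended reals `a < b`. -/
def erealIoo (a b : EReal) : Set ℝ := {x : ℝ | a < (x : ℝ) ∧ (x : ℝ) < b}

section aux
variable {K : Type*} [NormedAddCommGroup K] [InnerProductSpace ℂ K] [CompleteSpace K]
variable {A : K →L[ℂ] K} {l : ℝ}

private lemma aux_spec_pos (hA : 0 ≤ A) (hl : 0 < l) : ∀ t ∈ spectrum ℝ A, 0 < l + t :=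
  fun t ht => add_pos_of_pos_of_nonneg hl (spectrum_nonneg_of_nonneg hA ht)

private lemma aux_cfc_affine (hA : 0 ≤ A) :
    cfc (fun t : ℝ => l + t) A = algebraMap ℝ (K →L[ℂ] K) l + A := by
  have hsa : IsSelfAdjoint A := .of_nonneg hA
  rw [cfc_const_add l (fun t : ℝ => t) A continuousOn_id hsa, cfc_id' ℝ A]

private lemma aux_left (hA : 0 ≤ A) (hl : 0 < l) :
    (algebraMap ℝ (K →L[ℂ] K) l + A) * cfc (fun t : ℝ => t / (l + t)) A = A := by
  have hsa : IsSelfAdjoint A := .of_nonneg hA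
  have hpos := aux_spec_pos hA hl
  have hc1 : ContinuousOn (fun t : ℝ => l + t) (spectrum ℝ A) := by fun_prop
  have hc2 : ContinuousOn (fun t : ℝ => t / (l + t)) (spectrum ℝ A) :=
    ContinuousOn.div continuousOn_id (by fun_prop) (fun t ht => (hpos t ht).ne')
  rw [← aux_cfc_affine hA, ← cfc_mul _ _ A hc1 hc2]
  calc cfc (fun t : ℝ => (l + t) * (t / (l + t))) A
      = cfc (fun t : ℝ => t) A := cfc_congr (fun t ht => by
        rw [mul_comm, div_mul_cancel₀ _ (hpos t ht).ne'])
    _ = A := cfc_id' ℝ A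

private lemma aux_right (hA : 0 ≤ A) (hl : 0 < l) :
    cfc (fun t : ℝ => t / (l + t)) A * (algebraMap ℝ (K →L[ℂ] K) l + A) = A := by
  have hsa : IsSelfAdjoint A := .of_nonneg hA
  have hpos := aux_spec_pos hA hl
  have hc1 : ContinuousOn (fun t : ℝ => l + t) (spectrum ℝ A) := by fun_prop
  have hc2 : ContinuousOn (fun t : ℝ => t / (l + t)) (spectrum ℝ A) :=
    ContinuousOn.div continuousOn_id (by fun_prop) (fun t ht => (hpos t ht).ne')
  rw [← aux_cfc_affine hA, ← cfc_mul _ _ A hc2 hc1]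
  calc cfc (fun t : ℝ => (t / (l + t)) * (l + t)) A
      = cfc (fun t : ℝ => t) A := cfc_congr (fun t ht => by
        rw [div_mul_cancel₀ _ (hpos t ht).ne'])
    _ = A := cfc_id' ℝ A

private lemma aux_inv_left (hA : 0 ≤ A) (hl : 0 < l) :
    cfc (fun t : ℝ => (l + t)⁻¹) A * (algebraMap ℝ (K →L[ℂ] K) l + A) = 1 := by
  have hsa : IsSelfAdjoint A := .of_nonneg hA
  have hpos := aux_spec_pos hA hl
  have hc1 : ContinuousOn (fun t : ℝ => l + t) (spectrum ℝ A) := by fun_prop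
  have hc2 : ContinuousOn (fun t : ℝ => (l + t)⁻¹) (spectrum ℝ A) :=
    ContinuousOn.inv₀ (by fun_prop) (fun t ht => (hpos t ht).ne')
  rw [← aux_cfc_affine hA, ← cfc_mul _ _ A hc2 hc1]
  calc cfc (fun t : ℝ => (l + t)⁻¹ * (l + t)) A
      = cfc (fun _ : ℝ => (1 : ℝ)) A := cfc_congr (fun t ht => by
        rw [inv_mul_cancel₀ (hpos t ht).ne'])
    _ = 1 := by rw [cfc_const 1 A hsa, map_one]

private lemma aux_inv_right (hA : 0 ≤ A) (hl : 0 < l) :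
    (algebraMap ℝ (K →L[ℂ] K) l + A) * cfc (fun t : ℝ => (l + t)⁻¹) A = 1 := by
  have hsa : IsSelfAdjoint A := .of_nonneg hA
  have hpos := aux_spec_pos hA hl
  have hc1 : ContinuousOn (fun t : ℝ => l + t) (spectrum ℝ A) := by fun_prop
  have hc2 : ContinuousOn (fun t : ℝ => (l + t)⁻¹) (spectrum ℝ A) :=
    ContinuousOn.inv₀ (by fun_prop) (fun t ht => (hpos t ht).ne')
  rw [← aux_cfc_affine hA, ← cfc_mul _ _ A hc1 hc2]
  calc cfc (fun t : ℝ => (l + t) * (l + t)⁻¹) A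
      = cfc (fun _ : ℝ => (1 : ℝ)) A := cfc_congr (fun t ht => by
        rw [mul_inv_cancel₀ (hpos t ht).ne'])
    _ = 1 := by rw [cfc_const 1 A hsa, map_one]

end aux

/-- For positive bounded operators `A`, `B` on a complex Hilbert space and
`λ > 0`, the inequality `(A+B)(λ+A+B)⁻¹ ≤ A(λ+A)⁻¹ + B(λ+B)⁻¹` holds if and only if
`AB + BA + B·A(λ+A)⁻¹·B + A·B(λ+B)⁻¹·A ≥ 0`, where `A(λ+A)⁻¹ = cfc (t ↦ t/(λ+t)) A`. -/
theorem resolvent_subadditivity_iff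
    (H : Type) [NormedAddCommGroup H] [InnerProductSpace ℂ H] [CompleteSpace H]
    (A B : H →L[ℂ] H) (hA : 0 ≤ A) (hB : 0 ≤ B) (l : ℝ) (hl : 0 < l) :
    cfc (fun t : ℝ => t / (l + t)) (A + B) ≤
        cfc (fun t : ℝ => t / (l + t)) A + cfc (fun t : ℝ => t / (l + t)) B ↔
      0 ≤ A * B + B * A + B * cfc (fun t : ℝ => t / (l + t)) A * B +
          A * cfc (fun t : ℝ => t / (l + t)) B * A := by
  set f : ℝ → ℝ := fun t => t / (l + t) with hf
  set e : H →L[ℂ] H := algebraMap ℝ (H →L[ℂ] H) l with he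
  have hAB : 0 ≤ A + B := add_nonneg hA hB
  set fA := cfc f A
  set fB := cfc f B
  set fS := cfc f (A + B)
  set D := fA + fB - fS with hD
  set S := e + A + B with hS
  have e1 : (e + A) * fA = A := aux_left hA hl
  have e2 : fA * (e + A) = A := aux_right hA hl
  have e3 : (e + B) * fB = B := aux_left hB hl
  have e4 : fB * (e + B) = B := aux_right hB hl
  have e5 : (e + (A + B)) * fS = A + B := aux_left hAB hl
  set R := cfc (fun t : ℝ => (l + t)⁻¹) (A + B) with hR
  have hRS : R * S = 1 := by
    rw [hS, add_assoc]; exact aux_inv_left hAB hl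
  have hSR : S * R = 1 := by
    rw [hS, add_assoc]; exact aux_inv_right hAB hl
  have key : S * D * S =
      A * B + B * A + B * fA * B + A * fB * A := by
    have expand : S * D * S =
        ((e + A) * fA) * (e + A) + B * (fA * (e + A)) + ((e + A) * fA) * B + B * fA * B
        + ((e + B) * fB) * (e + B) + A * (fB * (e + B)) + ((e + B) * fB) * A + A * fB * A
        - ((e + (A + B)) * fS) * (e + (A + B)) := by
      rw [hS, hD]; noncomm_ring
    rw [expand, e1, e2, e3, e4, e5]
    noncomm_ring
  have hsaD : IsSelfAdjoint D :=
    ((cfc_predicate f A).add (cfc_predicate f B)).sub (cfc_predicate f (A + B))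
  have hsaS : IsSelfAdjoint S :=
    ((IsSelfAdjoint.algebraMap _ (IsSelfAdjoint.all l)).add (.of_nonneg hA)).add
      (.of_nonneg hB)
  have hsaR : IsSelfAdjoint R := cfc_predicate _ (A + B)
  rw [show (fS ≤ fA + fB) ↔ 0 ≤ D from (sub_nonneg).symm]
  constructor
  · intro h
    rw [← key]
    exact hsaS.conjugate_nonneg h
  · intro h
    have h2 : 0 ≤ S * D * S := key ▸ h
    have hDeq : D = R * (S * D * S) * R := by
      have : R * (S * D * S) * R = (R * S) * D * (S * R) := by noncomm_ring
      rw [this, hRS, hSR, one_mul, mul_one]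
    rw [hDeq]
    exact hsaR.conjugate_nonneg h2
end

section
/- Let H be a complex Hilbert space and let A, B be positive bounded linear operators on H such that AB + BA ≥ 0. Then for every λ > 0, (A+B)(λI+A+B)^{-1} ≤ A(λI+A)^{-1} + B(λI+B)^{-1}. -/
theorem add_mul_mul_add_of_mul_eq_one {R : Type*} [Ring R] {x y p : R}
    (h₁ : x * p = 1) (h₂ : p * x = 1) :
    (x + y) * p * (x + y) = x + y + y + y * p * y := by
  simp only [add_mul, mul_add, h₁, one_mul]
  rw [mul_assoc y p x, h₂, mul_one]
  abel

theorem mul_resolvent_defect_mul {k R : Type*} [CommRing k] [Ring R] [Algebra k R] (l : k)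
    {a b p q u : R}
    (hp : (algebraMap k R l + a) * p = 1) (hp' : p * (algebraMap k R l + a) = 1)
    (hq : (algebraMap k R l + b) * q = 1) (hq' : q * (algebraMap k R l + b) = 1)
    (hu : u * (algebraMap k R l + (a + b)) = 1) :
    (algebraMap k R l + (a + b)) * ((1 - l • p) + (1 - l • q) - (1 - l • u)) *
        (algebraMap k R l + (a + b)) =
      a * b + b * a + b * (1 - l • p) * b + a * (1 - l • q) * a := by
  set z := algebraMap k R l + (a + b) with hz
  have hzp : z * p * z = z + b + b * p * b := by
    rw [hz, ← add_assoc]; exact add_mul_mul_add_of_mul_eq_one hp hp'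
  have hzq : z * q * z = z + a + a * q * a := by
    rw [hz, add_comm a b, ← add_assoc]; exact add_mul_mul_add_of_mul_eq_one hq hq'
  have hzu : z * u * z = z := by rw [mul_assoc, hu, mul_one]
  have hexp : z * ((1 - l • p) + (1 - l • q) - (1 - l • u)) * z =
      z * z - l • (z * p * z) - l • (z * q * z) + l • (z * u * z) := by
    simp only [mul_add, add_mul, mul_sub, sub_mul, smul_mul_assoc, mul_smul_comm, mul_one]
    abel
  rw [hexp, hzp, hzq, hzu, hz, Algebra.algebraMap_eq_smul_one]
  simp only [mul_add, add_mul, mul_sub, sub_mul, smul_mul_assoc, mul_smul_comm, mul_one, one_mul,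
    smul_add]
  module

theorem continuousOn_inv_const_add {R : Type*} [Field R] [TopologicalSpace R] [ContinuousAdd R]
    [ContinuousInv₀ R] {l : R} {s : Set R} (h : ∀ t ∈ s, l + t ≠ 0) :
    ContinuousOn (fun t ↦ (l + t)⁻¹) s :=
  (continuousOn_const.add continuousOn_id).inv₀ h

section Resolvent

variable {R A : Type*} {p : A → Prop} [Field R] [StarRing R] [MetricSpace R]
  [IsTopologicalRing R] [ContinuousStar R] [TopologicalSpace A] [Ring A]
  [StarRing A] [Algebra R A] [ContinuousFunctionalCalculus R A p]

theorem cfc_const_add_id (l : R) (a : A) (ha : p a := by cfc_tac) :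
    cfc (fun t ↦ l + t) a = algebraMap R A l + a := by
  rw [cfc_const_add .., cfc_id' ..]

variable [ContinuousInv₀ R]

theorem algebraMap_add_mul_cfc_inv_const_add {l : R} {a : A} (h : ∀ t ∈ spectrum R a, l + t ≠ 0)
    (ha : p a := by cfc_tac) :
    (algebraMap R A l + a) * cfc (fun t ↦ (l + t)⁻¹) a = 1 := by
  have hinv := continuousOn_inv_const_add h
  rw [← cfc_const_add_id l a, ← cfc_mul (fun t ↦ l + t) _ a (hg := hinv), ← cfc_const_one R a]
  exact cfc_congr fun t ht ↦ mul_inv_cancel₀ (h t ht)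

theorem cfc_inv_const_add_mul_algebraMap_add {l : R} {a : A} (h : ∀ t ∈ spectrum R a, l + t ≠ 0)
    (ha : p a := by cfc_tac) :
    cfc (fun t ↦ (l + t)⁻¹) a * (algebraMap R A l + a) = 1 := by
  have hinv := continuousOn_inv_const_add h
  rw [← cfc_const_add_id l a, ← cfc_mul _ (fun t ↦ l + t) a hinv, ← cfc_const_one R a]
  exact cfc_congr fun t ht ↦ inv_mul_cancel₀ (h t ht)

theorem cfc_div_const_add {l : R} {a : A} (h : ∀ t ∈ spectrum R a, l + t ≠ 0)
    (ha : p a := by cfc_tac) :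
    cfc (fun t ↦ t / (l + t)) a = 1 - l • cfc (fun t ↦ (l + t)⁻¹) a := by
  have hinv := continuousOn_inv_const_add h
  calc cfc (fun t ↦ t / (l + t)) a = cfc (fun t ↦ 1 - l * (l + t)⁻¹) a :=
        cfc_congr fun t ht ↦ by field_simp [h t ht]; ring
    _ = 1 - l • cfc (fun t ↦ (l + t)⁻¹) a := by
        rw [cfc_sub (fun _ ↦ 1) (fun t ↦ l * (l + t)⁻¹) a continuousOn_const
          (continuousOn_const.mul hinv),
          cfc_const_one R a, cfc_const_mul l _ a hinv]

end Resolvent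

section CStarAlgebra

variable {A : Type*} [CStarAlgebra A] [PartialOrder A] [StarOrderedRing A]

theorem const_add_ne_zero_of_nonneg {l : ℝ} (hl : 0 < l) {a : A} (ha : 0 ≤ a) :
    ∀ t ∈ spectrum ℝ a, l + t ≠ 0 :=
  fun _ ht ↦ (add_pos_of_pos_of_nonneg hl (spectrum_nonneg_of_nonneg ha ht)).ne'

theorem cfc_div_const_add_nonneg {l : ℝ} (hl : 0 < l) {a : A} (ha : 0 ≤ a) :
    0 ≤ cfc (fun t : ℝ ↦ t / (l + t)) a :=
  cfc_nonneg fun _ ht ↦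
    have ht₀ := spectrum_nonneg_of_nonneg ha ht
    div_nonneg ht₀ (by linarith)

theorem cfc_div_const_add_add_le {a b : A} (ha : 0 ≤ a) (hb : 0 ≤ b) (hab : 0 ≤ a * b + b * a)
    {l : ℝ} (hl : 0 < l) :
    cfc (fun t : ℝ ↦ t / (l + t)) (a + b) ≤
      cfc (fun t : ℝ ↦ t / (l + t)) a + cfc (fun t : ℝ ↦ t / (l + t)) b := by
  have hc : 0 ≤ a + b := add_nonneg ha hb
  have hfa := cfc_div_const_add_nonneg hl ha
  have hfb := cfc_div_const_add_nonneg hl hb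
  have hspec {x : A} (hx : 0 ≤ x) := const_add_ne_zero_of_nonneg hl hx
  rw [cfc_div_const_add (hspec ha)] at hfa ⊢
  rw [cfc_div_const_add (hspec hb)] at hfb ⊢
  rw [cfc_div_const_add (hspec hc), ← sub_nonneg]
  set z := algebraMap ℝ A l + (a + b)
  have hz : IsUnit z := (⟨z, _, algebraMap_add_mul_cfc_inv_const_add (hspec hc),
    cfc_inv_const_add_mul_algebraMap_add (hspec hc)⟩ : Aˣ).isUnit
  have hz_sa : IsSelfAdjoint z := (IsSelfAdjoint.algebraMap A (.all l)).add hc.isSelfAdjoint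
  rw [← hz.star_left_conjugate_nonneg_iff, hz_sa.star_eq,
    mul_resolvent_defect_mul l (algebraMap_add_mul_cfc_inv_const_add (hspec ha))
      (cfc_inv_const_add_mul_algebraMap_add (hspec ha))
      (algebraMap_add_mul_cfc_inv_const_add (hspec hb))
      (cfc_inv_const_add_mul_algebraMap_add (hspec hb))
      (cfc_inv_const_add_mul_algebraMap_add (hspec hc))]
  have hbfb := hb.isSelfAdjoint.star_eq ▸ star_left_conjugate_nonneg hfa b
  have hafa := ha.isSelfAdjoint.star_eq ▸ star_left_conjugate_nonneg hfb a
  exact add_nonneg (add_nonneg hab hbfb) hafa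

end CStarAlgebra

/-- If `A`, `B` are positive bounded operators on a complex Hilbert space with
`AB + BA ≥ 0`, then for every `λ > 0`,
`(A+B)(λ+A+B)⁻¹ ≤ A(λ+A)⁻¹ + B(λ+B)⁻¹`, where `A(λ+A)⁻¹ = cfc (t ↦ t/(λ+t)) A`. -/
theorem resolvent_subadditive_of_symmetrized_product_pos
    (H : Type) [NormedAddCommGroup H] [InnerProductSpace ℂ H] [CompleteSpace H]
    (A B : H →L[ℂ] H) (hA : 0 ≤ A) (hB : 0 ≤ B) (h : 0 ≤ A * B + B * A)
    (l : ℝ) (hl : 0 < l) :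
    cfc (fun t : ℝ => t / (l + t)) (A + B) ≤
      cfc (fun t : ℝ => t / (l + t)) A + cfc (fun t : ℝ => t / (l + t)) B :=
  cfc_div_const_add_add_le hA hB h hl
end

section
/- Let H be a complex Hilbert space, let A, B be positive bounded linear operators on H with B² ≤ A², and let λ > 0. Then B²(λI+B)^{-1} ≤ A²(λI+A)^{-1}. -/
/-!
With `a = A ^ 2` and `f s = s / (λ + √s)` one has `A²(λ+A)⁻¹ = f(a)`, so it suffices that `f` is
operator monotone on positive elements. For invertible `a`, `f(a)⁻¹ = λ a⁻¹ + (√a)⁻¹`, and both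
`a ↦ a⁻¹` and `a ↦ (√a)⁻¹` are operator antitone (the latter by operator monotonicity of the
square root), so inverting once more shows that `f` is monotone on invertible positive elements.
The general case follows by comparing `a + ε` with `b + ε` and letting `ε → 0`, using the
continuity of the functional calculus in its argument.
-/

open Filter Topology Ring

lemma continuous_div_add_sqrt {l : ℝ} (hl : 0 < l) : Continuous fun s : ℝ => s / (l + √s) :=
  continuous_id.div (continuous_const.add Real.continuous_sqrt) fun s => by positivity

lemma inv_mul_inv_add_inv_sqrt {l s : ℝ} (hs : 0 < s) :
    (l * s⁻¹ + (√s)⁻¹)⁻¹ = s / (l + √s) := by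
  have hsqrt : 0 < √s := Real.sqrt_pos.mpr hs
  rw [← inv_div]
  congr 1
  field_simp
  linear_combination -Real.mul_self_sqrt hs.le

namespace CFC

lemma tendsto_cfc_add_algebraMap {A : Type*} [CStarAlgebra A] {f : ℝ → ℝ} (hf : Continuous f)
    {a : A} (ha : IsSelfAdjoint a) :
    Tendsto (fun ε : ℝ => cfc f (a + algebraMap ℝ A ε)) (𝓝 0) (𝓝 (cfc f a)) := by
  have hcont : Continuous fun ε : ℝ => cfc f (a + algebraMap ℝ A ε) :=
    Continuous.cfc_of_mem_nhdsSet f univ_mem (by fun_prop)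
      (fun ε => ha.add (.algebraMap A (.all ε))) hf.continuousOn
  simpa using hcont.tendsto 0

variable {A : Type*} [CStarAlgebra A] [PartialOrder A] [StarOrderedRing A]

lemma cfc_div_add_sqrt_eq_ringInverse {l : ℝ} (hl : 0 ≤ l) {a : A} (ha : IsStrictlyPositive a) :
    cfc (fun s : ℝ => s / (l + √s)) a = (l • a⁻¹ʳ + (sqrt a)⁻¹ʳ)⁻¹ʳ := by
  have hspec : ∀ s ∈ spectrum ℝ a, 0 < s := fun s hs => ha.spectrum_pos hs
  have hsqrt : ∀ s ∈ spectrum ℝ a, √s ≠ 0 := fun s hs => (Real.sqrt_pos.mpr (hspec s hs)).ne'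
  have hinv : ContinuousOn (·⁻¹ : ℝ → ℝ) (spectrum ℝ a) :=
    continuousOn_inv₀.mono fun s hs => (hspec s hs).ne'
  have hsqrt_inv : ContinuousOn (fun s : ℝ => (√s)⁻¹) (spectrum ℝ a) :=
    Real.continuous_sqrt.continuousOn.inv₀ hsqrt
  calc cfc (fun s : ℝ => s / (l + √s)) a
      = cfc (fun s : ℝ => (l * s⁻¹ + (√s)⁻¹)⁻¹) a :=
        cfc_congr fun s hs => (inv_mul_inv_add_inv_sqrt (hspec s hs)).symm
    _ = (cfc (fun s : ℝ => l * s⁻¹ + (√s)⁻¹) a)⁻¹ʳ :=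
        cfc_inv _ a (fun s hs => by have := hspec s hs; positivity)
          ((continuousOn_const.mul hinv).add hsqrt_inv)
    _ = (l • cfc (·⁻¹ : ℝ → ℝ) a + cfc (fun s : ℝ => (√s)⁻¹) a)⁻¹ʳ := by
        rw [cfc_add a (fun s => l * s⁻¹) _ (continuousOn_const.fun_mul hinv) hsqrt_inv,
          cfc_const_mul _ _ _ hinv]
    _ = (l • a⁻¹ʳ + (sqrt a)⁻¹ʳ)⁻¹ʳ := by
        rw [cfc_ringInverse_id a ha.isUnit, cfc_inv _ a hsqrt, sqrt_eq_real_sqrt a ha.nonneg,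
          cfcₙ_eq_cfc]

lemma cfc_div_add_sqrt_le_of_isStrictlyPositive {l : ℝ} (hl : 0 ≤ l) {a b : A}
    (ha : IsStrictlyPositive a) (hab : a ≤ b) :
    cfc (fun s : ℝ => s / (l + √s)) a ≤ cfc (fun s : ℝ => s / (l + √s)) b := by
  have hb : IsStrictlyPositive b := ha.of_le hab
  have hinv : b⁻¹ʳ ≤ a⁻¹ʳ := CStarAlgebra.ringInverse_le_ringInverse hab ha
  have hsqrt_inv : (sqrt b)⁻¹ʳ ≤ (sqrt a)⁻¹ʳ :=
    CStarAlgebra.ringInverse_le_ringInverse (sqrt_le_sqrt a b hab) ha.sqrt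
  have hsum : l • b⁻¹ʳ + (sqrt b)⁻¹ʳ ≤ l • a⁻¹ʳ + (sqrt a)⁻¹ʳ :=
    add_le_add (smul_le_smul_of_nonneg_left hinv hl) hsqrt_inv
  have hsum_pos : IsStrictlyPositive (l • b⁻¹ʳ + (sqrt b)⁻¹ʳ) :=
    hb.sqrt.ringInverse.nonneg_add (smul_nonneg hl hb.ringInverse.nonneg)
  rw [cfc_div_add_sqrt_eq_ringInverse hl ha, cfc_div_add_sqrt_eq_ringInverse hl hb]
  exact CStarAlgebra.ringInverse_le_ringInverse hsum hsum_pos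

lemma cfc_div_add_sqrt_le {l : ℝ} (hl : 0 < l) {a b : A} (ha : 0 ≤ a) (hab : a ≤ b) :
    cfc (fun s : ℝ => s / (l + √s)) a ≤ cfc (fun s : ℝ => s / (l + √s)) b := by
  have hf := continuous_div_add_sqrt hl
  refine le_of_tendsto_of_tendsto (b := 𝓝[>] 0)
    ((tendsto_cfc_add_algebraMap hf (.of_nonneg ha)).mono_left nhdsWithin_le_nhds)
    ((tendsto_cfc_add_algebraMap hf (.of_nonneg (ha.trans hab))).mono_left nhdsWithin_le_nhds)
    (eventually_nhdsWithin_of_forall fun ε (hε : 0 < ε) => ?_)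
  exact cfc_div_add_sqrt_le_of_isStrictlyPositive hl.le
    ((isStrictlyPositive_algebraMap hε).nonneg_add ha) (add_le_add_left hab _)

lemma cfc_div_add_sqrt_sq {l : ℝ} (hl : 0 < l) {c : A} (hc : 0 ≤ c) :
    cfc (fun s : ℝ => s / (l + √s)) (c ^ 2) = cfc (fun t : ℝ => t ^ 2 / (l + t)) c := by
  rw [← cfc_comp_pow _ 2 c (continuous_div_add_sqrt hl).continuousOn (.of_nonneg hc)]
  exact cfc_congr fun t ht => by rw [Real.sqrt_sq (spectrum_nonneg_of_nonneg hc ht)]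

end CFC

/-- If `A`, `B` are positive bounded operators on a complex Hilbert space
with `B² ≤ A²` and `λ > 0`, then `B²(λ+B)⁻¹ ≤ A²(λ+A)⁻¹`, where
`A²(λ+A)⁻¹ = cfc (t ↦ t²/(λ+t)) A`. -/
theorem sq_resolvent_monotone
    (H : Type) [NormedAddCommGroup H] [InnerProductSpace ℂ H] [CompleteSpace H]
    (A B : H →L[ℂ] H) (hA : 0 ≤ A) (hB : 0 ≤ B) (h : B ^ 2 ≤ A ^ 2)
    (l : ℝ) (hl : 0 < l) :
    cfc (fun t : ℝ => t ^ 2 / (l + t)) B ≤ cfc (fun t : ℝ => t ^ 2 / (l + t)) A := by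
  rw [← CFC.cfc_div_add_sqrt_sq hl hB, ← CFC.cfc_div_add_sqrt_sq hl hA]
  exact CFC.cfc_div_add_sqrt_le hl (IsSelfAdjoint.of_nonneg hB).sq_nonneg h
end
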